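/- arXiv:2201.11415 — 3 statements merged into one kernel-verified Lean document; each statement's English description precedes it below -/
import Mathlib

section
/- If a measurable function κ : X × N → [0,∞) satisfies the cocycle relation κ(x,μ)·κ(y,μ+δ_x) = κ(y,μ)·κ(x,μ+δ_y) for all x,y ∈ X and μ ∈ N, then for each m the iterated product κ_m(x_1,…,x_m,μ) := κ(x_m,μ)·κ(x_{m-1},μ+δ_{x_m})·…·κ(x_1,μ+δ_{x_2}+…+δ_{x_m}) is invariant under every permutation of (x_1,…,x_m). -/
open MeasureTheory ENNReal

attribute [local instance] Classical.propDecidable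

namespace Gibbs

variable {X : Type*} [MeasurableSpace X]

noncomputable def diracSum (l : List X) : Measure X :=
  (l.map fun x => Measure.dirac x).sum

noncomputable def diracSumFin {m : ℕ} (v : Fin m → X) : Measure X :=
  ∑ i, Measure.dirac (v i)

noncomputable def kappaList (κ : X → Measure X → ℝ≥0∞) : List X → Measure X → ℝ≥0∞
  | [], _ => 1
  | x :: l, μ => κ x (μ + diracSum l) * kappaList κ l μ

noncomputable def kappaFin (κ : X → Measure X → ℝ≥0∞) {m : ℕ}
    (v : Fin m → X) (μ : Measure X) : ℝ≥0∞ :=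
  kappaList κ (List.ofFn v) μ

def Cocycle (κ : X → Measure X → ℝ≥0∞) : Prop :=
  ∀ (x y : X) (μ : Measure X),
    κ x μ * κ y (μ + Measure.dirac x) = κ y μ * κ x (μ + Measure.dirac y)

def IsLocalization (Bseq : ℕ → Set X) : Prop :=
  Monotone Bseq ∧ (∀ j, MeasurableSet (Bseq j)) ∧ (⋃ j, Bseq j) = Set.univ

def IsCounting (Bseq : ℕ → Set X) (μ : Measure X) : Prop :=
  ∀ j, ∃ n : ℕ, μ (Bseq j) = n

structure IsFactorial (fact : Measure X → (m : ℕ) → Measure (Fin m → X)) : Prop where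
  one : ∀ μ : Measure X, fact μ 1 = Measure.map (fun x => (fun _ : Fin 1 => x)) μ
  symm : ∀ (μ : Measure X) (m : ℕ) (σ : Equiv.Perm (Fin m)),
    Measure.map (fun v => v ∘ σ) (fact μ m) = fact μ m
  recur : ∀ (μ : Measure X) (m : ℕ) (A : Set (Fin (m + 1) → X)), MeasurableSet A →
    fact μ (m + 1) A =
      ∫⁻ v, (μ {x | Fin.snoc v x ∈ A}
        - ∑ j : Fin m, Set.indicator A (fun _ => (1 : ℝ≥0∞)) (Fin.snoc v (v j))) ∂ fact μ m

noncomputable def enat (c : ℝ≥0∞) : ℕ := ⌊c.toReal⌋₊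

noncomputable def elog (c : ℝ≥0∞) : EReal :=
  if c = 0 then ⊥ else if c = ⊤ then ⊤ else ((Real.log c.toReal : ℝ) : EReal)

noncomputable def eexp (x : EReal) : ℝ≥0∞ :=
  if x = ⊥ then 0 else if x = ⊤ then ⊤ else ENNReal.ofReal (Real.exp x.toReal)

noncomputable def hamiltonian (κ : X → Measure X → ℝ≥0∞)
    (fact : Measure X → (m : ℕ) → Measure (Fin m → X)) (μ ψ : Measure X) : EReal :=
  if μ Set.univ = 0 then 0
  else if μ Set.univ = ⊤ then ⊤
  else - elog ((((enat (μ Set.univ)).factorial : ℝ≥0∞))⁻¹ *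
    ∫⁻ v : Fin (enat (μ Set.univ)) → X, kappaFin κ v ψ ∂ fact μ (enat (μ Set.univ)))

noncomputable def partitionZ (κ : X → Measure X → ℝ≥0∞) (lam : Measure X)
    (B : Set X) (ψ : Measure X) : ℝ≥0∞ :=
  1 + ∑' m : ℕ, (((m + 1).factorial : ℝ≥0∞))⁻¹ *
    ∫⁻ v : Fin (m + 1) → X, kappaFin κ v ψ ∂(Measure.pi fun _ : Fin (m + 1) => lam.restrict B)

noncomputable def kernelRestrict (κ : X → Measure X → ℝ≥0∞) (C : Set X) (ψ : Measure X) :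
    X → Measure X → ℝ≥0∞ :=
  fun x μ => κ x (ψ + μ) * Set.indicator C (fun _ => (1 : ℝ≥0∞)) x

theorem kappaList_perm_invariant
    (κ : X → Measure X → ℝ≥0∞)
    (hκmeas : Measurable fun p : X × Measure X => κ p.1 p.2)
    (hκfin : ∀ (x : X) (μ : Measure X), κ x μ ≠ ⊤)
    (hcoc : Cocycle κ) :
    ∀ (l l' : List X), l.Perm l' → ∀ μ : Measure X,
      kappaList κ l μ = kappaList κ l' μ := by
  have hds : ∀ (l l' : List X), l.Perm l' → diracSum l = diracSum l' := by
    intro l l' h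
    exact List.Perm.sum_eq (h.map _)
  intro l l' h
  induction h with
  | nil => intro μ; rfl
  | cons x h ih =>
      intro μ
      simp only [kappaList, ih μ, hds _ _ h]
  | swap x y l =>
      intro μ
      have hds2 : ∀ z : X, μ + diracSum (z :: l) = (μ + diracSum l) + Measure.dirac z := by
        intro z
        simp only [diracSum, List.map_cons, List.sum_cons]
        abel
      simp only [kappaList, hds2, ← mul_assoc]
      rw [mul_comm (κ x (μ + diracSum l + Measure.dirac y)) (κ y (μ + diracSum l)),
        hcoc y x (μ + diracSum l),
        mul_comm (κ x (μ + diracSum l)) (κ y (μ + diracSum l + Measure.dirac x))]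
  | trans _ _ ih1 ih2 => intro μ; exact (ih1 μ).trans (ih2 μ)

end Gibbs
end

section
/- If η is a Gibbs process with Papangelou intensity κ and B is a measurable set with η(B) < ∞ almost surely, then almost surely Z_B(η_{B^c}) < ∞ and P(η(B)=0 | η_{B^c}) = 1 / Z_B(η_{B^c}). -/
/-!
Apply the GNZ equation to `f x μ = 1_B(x) φ(μ)`: it expresses `E[η(B) φ(η)]` through the
configurations `η + δ_x`, `x ∈ B`, which have one more point in `B` and the same restriction to
`Bᶜ`. For `φ = 1{μ(B) ∈ (k, k+1)}` this shows by induction on `k` that `η(B)` is a.s. an integer.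
For `φ(μ) = 1{μ(B) = k+1} g(μ|Bᶜ) T_m(μ)`, with `T_m = kappaIntegral κ lam B m`, it gives
`(k+1) E[1{η(B)=k+1} g T_m(η)] = E[1{η(B)=k} g T_{m+1}(η)]`. Iterating from `k = 0`,
`m! E[1{η(B)=m} g(η|Bᶜ)] = E[1{η(B)=0} g(η|Bᶜ) T_m(η|Bᶜ)]`, and summing over `m`,
`E[g(η|Bᶜ)] = E[1{η(B)=0} g(η|Bᶜ) Z_B(η|Bᶜ)]` for every measurable `g ≥ 0`.
With `g = 1{Z_B = ∞}` this forces `Z_B(η|Bᶜ) < ∞` a.s., and with `g = 1_T / Z_B` it identifies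
`1 / Z_B(η|Bᶜ)` as the conditional probability of `{η(B) = 0}` given `η|Bᶜ`.
-/

open MeasureTheory ENNReal

attribute [local instance] Classical.propDecidable

namespace Gibbs

variable {X : Type*} [MeasurableSpace X]

lemma exists_eq_natCast_of_forall_notMem_Ioo {x : ℝ≥0∞} (hx : x ≠ ⊤)
    (h : ∀ k : ℕ, x ∉ Set.Ioo (k : ℝ≥0∞) (k + 1)) : ∃ n : ℕ, x = n := by
  lift x to NNReal using hx
  refine ⟨⌊x⌋₊, le_antisymm (not_lt.1 fun hlt => h ⌊x⌋₊ ⟨hlt, ?_⟩) ?_⟩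
  · exact_mod_cast Nat.lt_floor_add_one x
  · exact_mod_cast Nat.floor_le x.2

lemma measurable_restrict_measure {s : Set X} (hs : MeasurableSet s) :
    Measurable fun μ : Measure X => μ.restrict s :=
  Measure.measurable_of_measurable_coe _ fun t ht => by
    simpa only [Measure.restrict_apply ht] using Measure.measurable_coe (ht.inter hs)

lemma measurableSet_apply_eq {Ω : Type*} [MeasurableSpace Ω] {η : Ω → Measure X}
    (hη : Measurable η) {B : Set X} (hB : MeasurableSet B) (c : ℝ≥0∞) :
    MeasurableSet {ω | η ω B = c} :=
  hη (Measure.measurable_coe hB (measurableSet_singleton c))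

lemma add_dirac_apply_of_mem (μ : Measure X) {B : Set X} {x : X} (hx : x ∈ B) :
    (μ + Measure.dirac x) B = μ B + 1 := by
  simp [Measure.dirac_apply_of_mem hx]

lemma restrict_compl_add_dirac_of_mem (μ : Measure X) {B : Set X} (hB : MeasurableSet B) {x : X}
    (hx : x ∈ B) : (μ + Measure.dirac x).restrict Bᶜ = μ.restrict Bᶜ := by
  rw [Measure.restrict_add, restrict_dirac' hB.compl, if_neg (Set.notMem_compl_iff.2 hx), add_zero]

lemma restrict_compl_eq_self_of_apply_eq_zero {μ : Measure X} {B : Set X} (h : μ B = 0) :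
    μ.restrict Bᶜ = μ :=
  Measure.restrict_eq_self_of_ae_mem (measure_eq_zero_iff_ae_notMem.1 h)

lemma IsLocalization.sigmaFinite {Bseq : ℕ → Set X} (hloc : IsLocalization Bseq)
    {lam : Measure X} (hlam : ∀ j, lam (Bseq j) ≠ ⊤) : SigmaFinite lam :=
  ⟨⟨⟨Bseq, fun _ => trivial, fun j => (hlam j).lt_top, hloc.2.2⟩⟩⟩

section ConditionalProbability

variable {Ω E : Type*} [MeasurableSpace Ω] [MeasurableSpace E] {P : Measure Ω} {ψ : Ω → E}
  {S : Set Ω} {Z : E → ℝ≥0∞}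

lemma ae_lt_top_of_forall_lintegral_eq [IsFiniteMeasure P] (hZ : Measurable Z)
    (hψ : Measurable ψ)
    (hreweight : ∀ g : E → ℝ≥0∞, Measurable g →
      ∫⁻ ω, g (ψ ω) ∂P = ∫⁻ ω in S, g (ψ ω) * Z (ψ ω) ∂P) :
    ∀ᵐ ω ∂P, Z (ψ ω) < ⊤ := by
  have hA : MeasurableSet (ψ ⁻¹' (Z ⁻¹' {⊤})) := hψ (hZ (measurableSet_singleton ⊤))
  have htop := hreweight _ (measurable_one.indicator (hZ (measurableSet_singleton ⊤)))
  have hR : ∫⁻ ω in S, (Z ⁻¹' {⊤}).indicator 1 (ψ ω) * Z (ψ ω) ∂P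
      = ⊤ * P.restrict S (ψ ⁻¹' (Z ⁻¹' {⊤})) := by
    rw [← lintegral_indicator_const hA]
    congr 1 with ω
    by_cases hω : Z (ψ ω) = ⊤ <;> simp [hω]
  have hL : ∫⁻ ω, (Z ⁻¹' {⊤}).indicator 1 (ψ ω) ∂P = P (ψ ⁻¹' (Z ⁻¹' {⊤})) :=
    lintegral_indicator_one hA
  rw [hL, hR] at htop
  have hPA : P (ψ ⁻¹' (Z ⁻¹' {⊤})) = 0 := by
    rcases eq_or_ne (P.restrict S (ψ ⁻¹' (Z ⁻¹' {⊤}))) 0 with h0 | h0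
    · rwa [h0, mul_zero] at htop
    · exact absurd (htop.trans (ENNReal.top_mul h0)) (measure_ne_top P _)
  simpa [lt_top_iff_ne_top] using measure_eq_zero_iff_ae_notMem.1 hPA

lemma condExp_indicator_ae_eq_of_forall_lintegral_eq [IsFiniteMeasure P] (hZ : Measurable Z)
    (hZ0 : ∀ e, Z e ≠ 0) (hψ : Measurable ψ) (hS : MeasurableSet S)
    (hreweight : ∀ g : E → ℝ≥0∞, Measurable g →
      ∫⁻ ω, g (ψ ω) ∂P = ∫⁻ ω in S, g (ψ ω) * Z (ψ ω) ∂P) :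
    ∀ᵐ ω ∂P, (P[S.indicator (fun _ => (1 : ℝ)) | MeasurableSpace.comap ψ inferInstance]) ω
      = ((Z (ψ ω))⁻¹).toReal := by
  have hlexp : (fun ω => (Z (ψ ω))⁻¹)
      =ᵐ[P] P⁻[S.indicator 1 | MeasurableSpace.comap ψ inferInstance] := by
    refine ae_eq_condLExp hψ.comap_le P _ (hZ.inv.comp (comap_measurable ψ)) ?_
    rintro _ ⟨T, hT, rfl⟩
    have hZT : ∀ᵐ ω ∂P, ω ∈ S →
        T.indicator (fun e => (Z e)⁻¹) (ψ ω) * Z (ψ ω) = T.indicator 1 (ψ ω) := by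
      filter_upwards [ae_lt_top_of_forall_lintegral_eq hZ hψ hreweight] with ω hω _
      by_cases hT' : ψ ω ∈ T
      · simp only [Set.indicator_of_mem hT', Pi.one_apply]
        exact ENNReal.inv_mul_cancel (hZ0 _) hω.ne
      · simp [hT']
    calc ∫⁻ ω in ψ ⁻¹' T, (Z (ψ ω))⁻¹ ∂P
        = ∫⁻ ω, T.indicator (fun e => (Z e)⁻¹) (ψ ω) ∂P :=
          (lintegral_indicator (hψ hT) _).symm
      _ = ∫⁻ ω in S, (ψ ⁻¹' T).indicator 1 ω ∂P := by
          rw [hreweight (T.indicator fun e => (Z e)⁻¹) (hZ.inv.indicator hT)]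
          exact setLIntegral_congr_fun_ae hS hZT
      _ = ∫⁻ ω in ψ ⁻¹' T, S.indicator 1 ω ∂P := by
          rw [lintegral_indicator_one (hψ hT), lintegral_indicator_one hS,
            Measure.restrict_apply (hψ hT), Measure.restrict_apply hS, Set.inter_comm]
  have hreal : (fun ω => (S.indicator (1 : Ω → ℝ≥0∞) ω).toReal) = S.indicator fun _ => (1 : ℝ) := by
    ext ω
    by_cases hω : ω ∈ S <;> simp [hω]
  filter_upwards [hlexp, toReal_condLExp (MeasurableSpace.comap ψ inferInstance)
    (measurable_one.indicator hS).aemeasurable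
    (by simp [lintegral_indicator_one hS, measure_ne_top])] with ω h1 h2
  rw [h1, h2, hreal]

end ConditionalProbability

lemma diracSum_append (l₁ l₂ : List X) :
    diracSum (l₁ ++ l₂) = diracSum l₁ + diracSum l₂ := by
  simp [diracSum]

lemma diracSum_ofFn {m : ℕ} (v : Fin m → X) :
    diracSum (List.ofFn v) = ∑ i, Measure.dirac (v i) := by
  simp [diracSum, List.sum_ofFn]

lemma kappaList_concat (κ : X → Measure X → ℝ≥0∞) (l : List X) (x : X) (μ : Measure X) :
    kappaList κ (l ++ [x]) μ = kappaList κ l (μ + Measure.dirac x) * κ x μ := by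
  induction l with
  | nil => simp [kappaList, diracSum]
  | cons y l ih =>
    rw [List.cons_append, kappaList, kappaList, ih, diracSum_append, add_comm (diracSum l),
      ← add_assoc, mul_assoc]
    simp [diracSum]

lemma kappaFin_snoc (κ : X → Measure X → ℝ≥0∞) {m : ℕ} (v : Fin m → X) (x : X)
    (μ : Measure X) :
    kappaFin κ (Fin.snoc v x) μ = kappaFin κ v (μ + Measure.dirac x) * κ x μ := by
  simp only [kappaFin, List.ofFn_succ', Fin.snoc_castSucc, Fin.snoc_last, List.concat_eq_append,
    kappaList_concat]

lemma measurable_kappaFin {κ : X → Measure X → ℝ≥0∞}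
    (hκ : Measurable fun p : X × Measure X => κ p.1 p.2) :
    ∀ m : ℕ, Measurable fun p : (Fin m → X) × Measure X => kappaFin κ p.1 p.2
  | 0 => by simp [kappaFin, kappaList]
  | m + 1 => by
    have htail : Measurable fun p : (Fin (m + 1) → X) × Measure X => Fin.tail p.1 :=
      (measurable_pi_lambda _ fun i : Fin m => measurable_pi_apply i.succ).comp measurable_fst
    have hsum : Measurable fun p : (Fin (m + 1) → X) × Measure X =>
        p.2 + ∑ i : Fin m, Measure.dirac (p.1 i.succ) :=
      measurable_snd.add (Finset.measurable_sum _ fun (i : Fin m) _ =>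
        Measure.measurable_dirac.comp ((measurable_pi_apply i.succ).comp measurable_fst))
    simp only [kappaFin, List.ofFn_succ, kappaList, diracSum_ofFn]
    exact (hκ.comp (((measurable_pi_apply 0).comp measurable_fst).prodMk hsum)).mul
      ((measurable_kappaFin hκ m).comp (htail.prodMk measurable_snd))

noncomputable def kappaIntegral (κ : X → Measure X → ℝ≥0∞) (lam : Measure X) (B : Set X)
    (m : ℕ) (μ : Measure X) : ℝ≥0∞ :=
  ∫⁻ v : Fin m → X, kappaFin κ v μ ∂(Measure.pi fun _ : Fin m => lam.restrict B)

lemma kappaIntegral_zero (κ : X → Measure X → ℝ≥0∞) (lam : Measure X) (B : Set X)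
    (μ : Measure X) : kappaIntegral κ lam B 0 μ = 1 := by
  simp [kappaIntegral, kappaFin, kappaList]

lemma measurable_kappaIntegral {κ : X → Measure X → ℝ≥0∞}
    (hκ : Measurable fun p : X × Measure X => κ p.1 p.2) (lam : Measure X) (B : Set X)
    [SigmaFinite (lam.restrict B)] (m : ℕ) : Measurable (kappaIntegral κ lam B m) :=
  Measurable.lintegral_prod_right' (f := fun q : Measure X × (Fin m → X) => kappaFin κ q.2 q.1)
    ((measurable_kappaFin hκ m).comp measurable_swap)

lemma kappaIntegral_succ {κ : X → Measure X → ℝ≥0∞}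
    (hκ : Measurable fun p : X × Measure X => κ p.1 p.2) (lam : Measure X) (B : Set X)
    [SigmaFinite (lam.restrict B)] (m : ℕ) (μ : Measure X) :
    kappaIntegral κ lam B (m + 1) μ
      = ∫⁻ x in B, kappaIntegral κ lam B m (μ + Measure.dirac x) * κ x μ ∂lam := by
  have hmeas (n : ℕ) (μ : Measure X) : Measurable fun v : Fin n → X => kappaFin κ v μ :=
    (measurable_kappaFin hκ n).comp (measurable_id.prodMk measurable_const)
  have hsplit := (measurePreserving_piFinSuccAbove
    (fun _ : Fin (m + 1) => lam.restrict B) (Fin.last m)).symm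
  rw [kappaIntegral, ← hsplit.lintegral_comp (hmeas (m + 1) μ), lintegral_prod]
  swap; · exact ((hmeas (m + 1) μ).comp (MeasurableEquiv.measurable _)).aemeasurable
  refine lintegral_congr fun x => ?_
  have hsnoc (v : Fin m → X) :
      (MeasurableEquiv.piFinSuccAbove (fun _ => X) (Fin.last m)).symm (x, v) = Fin.snoc v x :=
    Fin.insertNth_last' x v
  simp only [hsnoc, kappaFin_snoc]
  exact lintegral_mul_const _ (hmeas m _)

lemma partitionZ_eq_tsum (κ : X → Measure X → ℝ≥0∞) (lam : Measure X) (B : Set X)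
    (ψ : Measure X) :
    partitionZ κ lam B ψ = ∑' m : ℕ, (m.factorial : ℝ≥0∞)⁻¹ * kappaIntegral κ lam B m ψ := by
  rw [tsum_eq_zero_add' ENNReal.summable, kappaIntegral_zero]
  simp [partitionZ, kappaIntegral]

lemma partitionZ_ne_zero (κ : X → Measure X → ℝ≥0∞) (lam : Measure X) (B : Set X)
    (ψ : Measure X) : partitionZ κ lam B ψ ≠ 0 := by
  simp [partitionZ]

lemma measurable_partitionZ {κ : X → Measure X → ℝ≥0∞}
    (hκ : Measurable fun p : X × Measure X => κ p.1 p.2) (lam : Measure X) (B : Set X)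
    [SigmaFinite (lam.restrict B)] : Measurable (partitionZ κ lam B) := by
  simp only [funext (partitionZ_eq_tsum κ lam B)]
  exact Measurable.tsum fun m => (measurable_kappaIntegral hκ lam B m).const_mul _

lemma setLIntegral_indicator_add_dirac {κ : X → Measure X → ℝ≥0∞}
    (hκ : Measurable fun p : X × Measure X => κ p.1 p.2) (lam : Measure X) {B : Set X}
    (hB : MeasurableSet B) [SigmaFinite (lam.restrict B)] (g : Measure X → ℝ≥0∞) (k m : ℕ)
    (μ : Measure X) :
    ∫⁻ x in B, {ν : Measure X | ν B = (k + 1 : ℕ)}.indicator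
        (fun ν => g (ν.restrict Bᶜ) * kappaIntegral κ lam B m ν) (μ + Measure.dirac x) * κ x μ ∂lam
      = {ν : Measure X | ν B = k}.indicator
        (fun ν => g (ν.restrict Bᶜ) * kappaIntegral κ lam B (m + 1) ν) μ := by
  by_cases hk : μ B = k
  · rw [Set.indicator_of_mem (show μ ∈ {ν : Measure X | ν B = k} from hk), kappaIntegral_succ hκ,
      ← lintegral_const_mul]
    · refine setLIntegral_congr_fun hB fun x hx => ?_
      simp [add_dirac_apply_of_mem _ hx, hk, restrict_compl_add_dirac_of_mem _ hB hx, mul_assoc]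
    · exact ((measurable_kappaIntegral hκ lam B m).comp (measurable_const.add
        Measure.measurable_dirac)).mul (hκ.comp (measurable_id.prodMk measurable_const))
  · rw [Set.indicator_of_notMem (show μ ∉ {ν : Measure X | ν B = k} from hk),
      ← lintegral_zero (μ := lam.restrict B)]
    refine setLIntegral_congr_fun hB fun x hx => ?_
    have hx' : μ + Measure.dirac x ∉ {ν : Measure X | ν B = (k + 1 : ℕ)} := by
      rw [Set.mem_ofPred_eq, add_dirac_apply_of_mem _ hx]
      push_cast
      exact fun h' => hk ((ENNReal.add_left_inj ENNReal.one_ne_top).1 h')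
    rw [Set.indicator_of_notMem hx', zero_mul]

-- The Georgii–Nguyen–Zessin equation: `κ` is a Papangelou intensity of `η` w.r.t. `lam`.
def SatisfiesGNZ {Ω : Type*} [MeasurableSpace Ω] (P : Measure Ω) (η : Ω → Measure X)
    (κ : X → Measure X → ℝ≥0∞) (lam : Measure X) : Prop :=
  ∀ f : X → Measure X → ℝ≥0∞, Measurable (fun p : X × Measure X => f p.1 p.2) →
    ∫⁻ ω, ∫⁻ x, f x (η ω) ∂(η ω) ∂P
      = ∫⁻ ω, ∫⁻ x, f x (η ω + Measure.dirac x) * κ x (η ω) ∂lam ∂P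

namespace SatisfiesGNZ

variable {Ω : Type*} [MeasurableSpace Ω] {P : Measure Ω} {η : Ω → Measure X}
  {κ : X → Measure X → ℝ≥0∞} {lam : Measure X} {B : Set X}

lemma lintegral_apply_mul (h : SatisfiesGNZ P η κ lam) (hB : MeasurableSet B)
    {φ : Measure X → ℝ≥0∞} (hφ : Measurable φ) :
    ∫⁻ ω, η ω B * φ (η ω) ∂P
      = ∫⁻ ω, ∫⁻ x in B, φ (η ω + Measure.dirac x) * κ x (η ω) ∂lam ∂P := by
  calc ∫⁻ ω, η ω B * φ (η ω) ∂P = ∫⁻ ω, ∫⁻ x, B.indicator 1 x * φ (η ω) ∂(η ω) ∂P := by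
        simp only [lintegral_mul_const _ (measurable_one.indicator hB), lintegral_indicator_one hB]
    _ = ∫⁻ ω, ∫⁻ x, B.indicator 1 x * φ (η ω + Measure.dirac x) * κ x (η ω) ∂lam ∂P :=
        h (fun x μ => B.indicator 1 x * φ μ)
          (((measurable_one.indicator hB).comp measurable_fst).mul (hφ.comp measurable_snd))
    _ = _ := lintegral_congr fun ω => by
        rw [← lintegral_indicator hB]
        congr 1 with x
        by_cases hx : x ∈ B <;> simp [hx]

lemma ae_notMem_of_ae_add_one_notMem (h : SatisfiesGNZ P η κ lam) (hη : Measurable η)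
    (hB : MeasurableSet B) {T : Set ℝ≥0∞} (hT : MeasurableSet T) (hT0 : 0 ∉ T)
    (hT1 : ∀ᵐ ω ∂P, η ω B + 1 ∉ T) : ∀ᵐ ω ∂P, η ω B ∉ T := by
  have hφ : Measurable fun μ : Measure X => T.indicator (1 : ℝ≥0∞ → ℝ≥0∞) (μ B) :=
    (measurable_one.indicator hT).comp (Measure.measurable_coe hB)
  have hzero : ∫⁻ ω, η ω B * T.indicator (1 : ℝ≥0∞ → ℝ≥0∞) (η ω B) ∂P = 0 := by
    rw [h.lintegral_apply_mul hB hφ, ← lintegral_zero]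
    refine lintegral_congr_ae ?_
    filter_upwards [hT1] with ω hω
    rw [← lintegral_zero (μ := lam.restrict B)]
    exact setLIntegral_congr_fun hB fun x hx => by simp [add_dirac_apply_of_mem _ hx, hω]
  filter_upwards [(lintegral_eq_zero_iff ((Measure.measurable_coe hB).comp hη |>.mul
    (hφ.comp hη))).1 hzero] with ω hω hmem
  have hne : η ω B ≠ 0 := fun h0 => hT0 (h0 ▸ hmem)
  simp [Set.indicator_of_mem hmem, hne] at hω

lemma ae_exists_eq_natCast (h : SatisfiesGNZ P η κ lam) (hη : Measurable η)
    (hB : MeasurableSet B) (hfin : ∀ᵐ ω ∂P, η ω B < ⊤) : ∀ᵐ ω ∂P, ∃ n : ℕ, η ω B = n := by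
  have hIoo (k : ℕ) : ∀ᵐ ω ∂P, η ω B ∉ Set.Ioo (k : ℝ≥0∞) (k + 1) := by
    induction k with
    | zero =>
      refine h.ae_notMem_of_ae_add_one_notMem hη hB measurableSet_Ioo (by simp)
        (ae_of_all _ fun ω hω => ?_)
      simp only [CharP.cast_eq_zero, zero_add, Set.mem_Ioo] at hω
      exact not_lt.2 le_add_self hω.2
    | succ k ih =>
      refine h.ae_notMem_of_ae_add_one_notMem hη hB measurableSet_Ioo (by simp) ?_
      filter_upwards [ih] with ω hω ⟨hlo, hhi⟩
      push_cast at hlo hhi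
      exact hω ⟨(ENNReal.add_lt_add_iff_right ENNReal.one_ne_top).1 hlo,
        (ENNReal.add_lt_add_iff_right ENNReal.one_ne_top).1 hhi⟩
  filter_upwards [ae_all_iff.2 hIoo, hfin] with ω hω hfin
  exact exists_eq_natCast_of_forall_notMem_Ioo hfin.ne hω

lemma natCast_mul_setLIntegral_kappaIntegral (h : SatisfiesGNZ P η κ lam) (hη : Measurable η)
    (hκ : Measurable fun p : X × Measure X => κ p.1 p.2) (hB : MeasurableSet B)
    [SigmaFinite (lam.restrict B)] {g : Measure X → ℝ≥0∞} (hg : Measurable g) (k m : ℕ) :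
    ((k + 1 : ℕ) : ℝ≥0∞) * ∫⁻ ω in {ω | η ω B = (k + 1 : ℕ)},
        g ((η ω).restrict Bᶜ) * kappaIntegral κ lam B m (η ω) ∂P
      = ∫⁻ ω in {ω | η ω B = k},
        g ((η ω).restrict Bᶜ) * kappaIntegral κ lam B (m + 1) (η ω) ∂P := by
  set φ : Measure X → ℝ≥0∞ := {μ : Measure X | μ B = (k + 1 : ℕ)}.indicator
    fun μ => g (μ.restrict Bᶜ) * kappaIntegral κ lam B m μ
  have hφ : Measurable φ :=
    ((hg.comp (measurable_restrict_measure hB.compl)).mul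
      (measurable_kappaIntegral hκ lam B m)).indicator
      (Measure.measurable_coe hB (measurableSet_singleton _))
  calc ((k + 1 : ℕ) : ℝ≥0∞) * ∫⁻ ω in {ω | η ω B = (k + 1 : ℕ)},
        g ((η ω).restrict Bᶜ) * kappaIntegral κ lam B m (η ω) ∂P
      = ∫⁻ ω, η ω B * φ (η ω) ∂P := by
        rw [← lintegral_const_mul' _ _ (ENNReal.natCast_ne_top _),
          ← lintegral_indicator (measurableSet_apply_eq hη hB _)]
        refine lintegral_congr fun ω => ?_
        by_cases hk : η ω B = k + 1 <;> simp [φ, hk]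
    _ = _ := by
        rw [h.lintegral_apply_mul hB hφ, ← lintegral_indicator (measurableSet_apply_eq hη hB _)]
        exact lintegral_congr fun ω => setLIntegral_indicator_add_dirac hκ lam hB g k m (η ω)

lemma factorial_mul_setLIntegral_kappaIntegral (h : SatisfiesGNZ P η κ lam)
    (hη : Measurable η) (hκ : Measurable fun p : X × Measure X => κ p.1 p.2)
    (hB : MeasurableSet B) [SigmaFinite (lam.restrict B)] {g : Measure X → ℝ≥0∞}
    (hg : Measurable g) (m k : ℕ) :
    (k.factorial : ℝ≥0∞) * ∫⁻ ω in {ω | η ω B = k},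
        g ((η ω).restrict Bᶜ) * kappaIntegral κ lam B m (η ω) ∂P
      = ((k + m).factorial : ℝ≥0∞) * ∫⁻ ω in {ω | η ω B = (k + m : ℕ)},
        g ((η ω).restrict Bᶜ) ∂P := by
  induction m generalizing k with
  | zero => simp [kappaIntegral_zero]
  | succ m ih =>
    rw [← h.natCast_mul_setLIntegral_kappaIntegral hη hκ hB hg, ← mul_assoc, ← Nat.cast_mul,
      Nat.mul_comm, ← Nat.factorial_succ, ih, Nat.add_right_comm, Nat.add_assoc]

lemma lintegral_eq_setLIntegral_mul_partitionZ (h : SatisfiesGNZ P η κ lam)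
    (hη : Measurable η) (hκ : Measurable fun p : X × Measure X => κ p.1 p.2)
    (hB : MeasurableSet B) [SigmaFinite (lam.restrict B)] (hfin : ∀ᵐ ω ∂P, η ω B < ⊤)
    {g : Measure X → ℝ≥0∞} (hg : Measurable g) :
    ∫⁻ ω, g ((η ω).restrict Bᶜ) ∂P
      = ∫⁻ ω in {ω | η ω B = 0},
          g ((η ω).restrict Bᶜ) * partitionZ κ lam B ((η ω).restrict Bᶜ) ∂P := by
  have hψ : Measurable fun ω => (η ω).restrict Bᶜ := (measurable_restrict_measure hB.compl).comp hη
  have hmeas (n : ℕ) : Measurable fun ω =>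
      g ((η ω).restrict Bᶜ) * kappaIntegral κ lam B n ((η ω).restrict Bᶜ) :=
    (hg.comp hψ).mul ((measurable_kappaIntegral hκ lam B n).comp hψ)
  have hcover : ∀ᵐ ω ∂P, ω ∈ ⋃ n : ℕ, {ω | η ω B = n} := by
    simpa using h.ae_exists_eq_natCast hη hB hfin
  have hdisj : Pairwise (Function.onFun Disjoint fun n : ℕ => {ω | η ω B = n}) :=
    fun i j hij => Set.disjoint_left.2 fun ω hi hj => hij (Nat.cast_injective (hi.symm.trans hj))
  have hterm (n : ℕ) : ∫⁻ ω in {ω | η ω B = n}, g ((η ω).restrict Bᶜ) ∂P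
      = ∫⁻ ω in {ω | η ω B = 0}, (n.factorial : ℝ≥0∞)⁻¹ *
          (g ((η ω).restrict Bᶜ) * kappaIntegral κ lam B n ((η ω).restrict Bᶜ)) ∂P := by
    have hchain := h.factorial_mul_setLIntegral_kappaIntegral hη hκ hB hg n 0
    rw [Nat.factorial_zero, Nat.cast_one, one_mul, zero_add, Nat.cast_zero,
      setLIntegral_congr_fun (measurableSet_apply_eq hη hB 0)
        (g := fun ω => g ((η ω).restrict Bᶜ) * kappaIntegral κ lam B n ((η ω).restrict Bᶜ))
        fun ω hω => by simp only [restrict_compl_eq_self_of_apply_eq_zero hω]] at hchain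
    rw [lintegral_const_mul _ (hmeas n),
      hchain, ← mul_assoc, ENNReal.inv_mul_cancel (by simp [Nat.factorial_ne_zero])
        (ENNReal.natCast_ne_top _), one_mul]
  calc ∫⁻ ω, g ((η ω).restrict Bᶜ) ∂P
      = ∑' n : ℕ, ∫⁻ ω in {ω | η ω B = n}, g ((η ω).restrict Bᶜ) ∂P := by
        rw [← lintegral_iUnion (fun n => measurableSet_apply_eq hη hB _) hdisj,
          Measure.restrict_eq_self_of_ae_mem hcover]
    _ = ∫⁻ ω in {ω | η ω B = 0}, ∑' n : ℕ, (n.factorial : ℝ≥0∞)⁻¹ *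
          (g ((η ω).restrict Bᶜ) * kappaIntegral κ lam B n ((η ω).restrict Bᶜ)) ∂P := by
        rw [lintegral_tsum fun n => ((hmeas n).const_mul _).aemeasurable]
        exact tsum_congr hterm
    _ = _ := by
        simp only [partitionZ_eq_tsum, ← ENNReal.tsum_mul_left, mul_left_comm]

end SatisfiesGNZ

theorem partition_function_finite_and_void_probability_general
    {Ω : Type*} [MeasurableSpace Ω] (P : Measure Ω) [IsProbabilityMeasure P]
    (Bseq : ℕ → Set X) (hloc : IsLocalization Bseq)
    (lam : Measure X) (hlam : ∀ j, lam (Bseq j) ≠ ⊤)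
    (κ : X → Measure X → ℝ≥0∞)
    (hκmeas : Measurable fun p : X × Measure X => κ p.1 p.2)
    (η : Ω → Measure X) (hηmeas : Measurable η)
    (hGNZ : ∀ f : X → Measure X → ℝ≥0∞,
      Measurable (fun p : X × Measure X => f p.1 p.2) →
      ∫⁻ ω, ∫⁻ x, f x (η ω) ∂(η ω) ∂P
        = ∫⁻ ω, ∫⁻ x, f x (η ω + Measure.dirac x) * κ x (η ω) ∂lam ∂P)
    (B : Set X) (hB : MeasurableSet B) (hfinB : ∀ᵐ ω ∂P, η ω B < ⊤) :
    (∀ᵐ ω ∂P, partitionZ κ lam B ((η ω).restrict Bᶜ) < ⊤) ∧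
    (∀ᵐ ω ∂P,
      (P[Set.indicator {ω' : Ω | η ω' B = 0} (fun _ => (1 : ℝ)) |
          MeasurableSpace.comap (fun ω' => (η ω').restrict Bᶜ) inferInstance]) ω
        = ((partitionZ κ lam B ((η ω).restrict Bᶜ))⁻¹).toReal) := by
  have := hloc.sigmaFinite hlam
  have hψ : Measurable fun ω => (η ω).restrict Bᶜ :=
    (measurable_restrict_measure hB.compl).comp hηmeas
  have hZ := measurable_partitionZ hκmeas lam B
  have hreweight (g : Measure X → ℝ≥0∞) (hg : Measurable g) :=
    SatisfiesGNZ.lintegral_eq_setLIntegral_mul_partitionZ hGNZ hηmeas hκmeas hB hfinB hg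
  exact ⟨ae_lt_top_of_forall_lintegral_eq hZ hψ hreweight,
    condExp_indicator_ae_eq_of_forall_lintegral_eq hZ (partitionZ_ne_zero κ lam B) hψ
      (measurableSet_apply_eq hηmeas hB 0) hreweight⟩

theorem partition_function_finite_and_void_probability
    {Ω : Type*} [MeasurableSpace Ω] (P : Measure Ω) [IsProbabilityMeasure P]
    (Bseq : ℕ → Set X) (hloc : IsLocalization Bseq)
    (lam : Measure X) (hlam : ∀ j, lam (Bseq j) ≠ ⊤)
    (κ : X → Measure X → ℝ≥0∞)
    (hκmeas : Measurable fun p : X × Measure X => κ p.1 p.2)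
    (hκfin : ∀ (x : X) (μ : Measure X), κ x μ ≠ ⊤)
    (hcoc : Cocycle κ)
    (η : Ω → Measure X) (hηmeas : Measurable η)
    (hcount : ∀ ω, IsCounting Bseq (η ω))
    (hGNZ : ∀ f : X → Measure X → ℝ≥0∞,
      Measurable (fun p : X × Measure X => f p.1 p.2) →
      ∫⁻ ω, ∫⁻ x, f x (η ω) ∂(η ω) ∂P
        = ∫⁻ ω, ∫⁻ x, f x (η ω + Measure.dirac x) * κ x (η ω) ∂lam ∂P)
    (B : Set X) (hB : MeasurableSet B) (hfinB : ∀ᵐ ω ∂P, η ω B < ⊤) :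
    (∀ᵐ ω ∂P, partitionZ κ lam B ((η ω).restrict Bᶜ) < ⊤) ∧
    (∀ᵐ ω ∂P,
      (P[Set.indicator {ω' : Ω | η ω' B = 0} (fun _ => (1 : ℝ)) |
          MeasurableSpace.comap (fun ω' => (η ω').restrict Bᶜ) inferInstance]) ω
        = ((partitionZ κ lam B ((η ω).restrict Bᶜ))⁻¹).toReal) :=
  partition_function_finite_and_void_probability_general P Bseq hloc lam hlam κ hκmeas η hηmeas hGNZ
    B hB hfinB

end Gibbs
end

section
/- For measurable sets B, C and counting measures ψ, ν, the partition function built from the restricted kernel κ^{(C,ψ)}(x,μ) = κ(x, ψ+μ)·1_C(x) satisfies Z_B^{(C,ψ)}(ν) = Z_{B∩C}(ψ+ν). -/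
/-!
Unfolding the iterated product, the restricted kernel contributes the factor `1_C(xᵢ)` at every
particle, so `κ^{(C,ψ)}_m(x, ν) = 1_{Cᵐ}(x) κ_m(x, ψ + ν)`. Restricting the product measure
`(λ|_B)^m` to the box `Cᵐ` gives `(λ|_{B∩C})^m`; this holds for arbitrary `λ` (no σ-finiteness),
already at the level of product outer measures.
-/

open MeasureTheory ENNReal

attribute [local instance] Classical.propDecidable

namespace Gibbs

variable {X : Type*} [MeasurableSpace X]

section Product

variable {ι : Type*} [Fintype ι] {α : ι → Type*}

lemma outerMeasurePi_mono {m m' : ∀ i, OuterMeasure (α i)} (h : ∀ i, m i ≤ m' i) :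
    OuterMeasure.pi m ≤ OuterMeasure.pi m' :=
  OuterMeasure.le_pi.2 fun s _ =>
    (OuterMeasure.pi_pi_le m s).trans (Finset.prod_le_prod' fun i _ => h i (s i))

lemma outerMeasurePi_restrict (m : ∀ i, OuterMeasure (α i)) (C : ∀ i, Set (α i)) :
    OuterMeasure.pi (fun i => (m i).restrict (C i)) =
      (OuterMeasure.pi m).restrict (Set.univ.pi C) := by
  refine le_antisymm (fun t => ?_) (OuterMeasure.le_pi.2 fun s _ => ?_)
  · -- off the box some coordinate lies outside `C i`, a null set for `(m i).restrict (C i)`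
    have hnull : ∀ i, OuterMeasure.pi (fun i => (m i).restrict (C i)) {x | x i ∉ C i} = 0 := by
      intro i
      refine le_antisymm ?_ zero_le
      rw [show {x : ∀ i, α i | x i ∉ C i} = Function.eval i ⁻¹' (C i)ᶜ from rfl, Set.eval_preimage]
      refine (OuterMeasure.pi_pi_le _ _).trans (Finset.prod_eq_zero (Finset.mem_univ i) ?_).le
      simp [OuterMeasure.restrict_apply]
    have houtside : OuterMeasure.pi (fun i => (m i).restrict (C i)) (t \ Set.univ.pi C) = 0 := by
      refine measure_mono_null (fun x hx => ?_) (measure_iUnion_null hnull)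
      simpa [Set.mem_univ_pi] using hx.2
    calc OuterMeasure.pi (fun i => (m i).restrict (C i)) t
        ≤ OuterMeasure.pi (fun i => (m i).restrict (C i)) (t ∩ Set.univ.pi C) :=
          measure_le_inter_add_sdiff _ _ _ |>.trans_eq (by rw [houtside, add_zero])
      _ ≤ OuterMeasure.pi m (t ∩ Set.univ.pi C) :=
          outerMeasurePi_mono (fun i u => by
            rw [OuterMeasure.restrict_apply]; exact measure_mono Set.inter_subset_left) _
      _ = (OuterMeasure.pi m).restrict (Set.univ.pi C) t := (OuterMeasure.restrict_apply _ _ _).symm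
  · rw [OuterMeasure.restrict_apply, ← Set.pi_inter_distrib]
    simpa only [OuterMeasure.restrict_apply] using OuterMeasure.pi_pi_le m _

lemma measurePi_restrict [∀ i, MeasurableSpace (α i)] (μ : ∀ i, Measure (α i))
    {C : ∀ i, Set (α i)} (hC : ∀ i, MeasurableSet (C i)) :
    Measure.pi (fun i => (μ i).restrict (C i)) = (Measure.pi μ).restrict (Set.univ.pi C) := by
  ext s hs
  rw [Measure.restrict_apply hs, Measure.pi_def, Measure.pi_def, toMeasure_apply _ _ hs,
    toMeasure_apply _ _ (hs.inter (MeasurableSet.univ_pi hC))]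
  simp_rw [Measure.restrict_toOuterMeasure_eq_toOuterMeasure_restrict (hC _),
    outerMeasurePi_restrict, OuterMeasure.restrict_apply]

end Product

lemma kappaList_kernelRestrict (κ : X → Measure X → ℝ≥0∞) (C : Set X) (ψ ν : Measure X) :
    ∀ l : List X, kappaList (kernelRestrict κ C ψ) l ν =
      {l : List X | ∀ x ∈ l, x ∈ C}.indicator (kappaList κ · (ψ + ν)) l
  | [] => by simp [kappaList]
  | x :: l => by
    by_cases hx : x ∈ C <;>
      simp [Set.indicator_apply, kappaList, kernelRestrict, kappaList_kernelRestrict κ C ψ ν l,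
        add_assoc, hx]

lemma kappaFin_kernelRestrict (κ : X → Measure X → ℝ≥0∞) (C : Set X) (ψ ν : Measure X)
    {m : ℕ} (v : Fin m → X) :
    kappaFin (kernelRestrict κ C ψ) v ν =
      (Set.univ.pi fun _ => C).indicator (kappaFin κ · (ψ + ν)) v := by
  simp [kappaFin, kappaList_kernelRestrict, Set.indicator_apply]

theorem partitionZ_kernelRestrict_general
    (lam : Measure X)
    (κ : X → Measure X → ℝ≥0∞)
    (B C : Set X) (hC : MeasurableSet C)
    (ψ ν : Measure X) :
    partitionZ (kernelRestrict κ C ψ) lam B ν = partitionZ κ lam (B ∩ C) (ψ + ν) := by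
  unfold partitionZ
  congr 3 with m
  rw [lintegral_congr (kappaFin_kernelRestrict κ C ψ ν),
    lintegral_indicator (MeasurableSet.univ_pi fun _ => hC), ← measurePi_restrict _ fun _ => hC]
  simp_rw [Measure.restrict_restrict hC, Set.inter_comm]

theorem partitionZ_kernelRestrict
    (lam : Measure X)
    (κ : X → Measure X → ℝ≥0∞)
    (hκmeas : Measurable fun p : X × Measure X => κ p.1 p.2)
    (hκfin : ∀ (x : X) (μ : Measure X), κ x μ ≠ ⊤)
    (hcoc : Cocycle κ)
    (B C : Set X) (hB : MeasurableSet B) (hC : MeasurableSet C)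
    (ψ ν : Measure X) :
    partitionZ (kernelRestrict κ C ψ) lam B ν = partitionZ κ lam (B ∩ C) (ψ + ν) :=
  partitionZ_kernelRestrict_general lam κ B C hC ψ ν

end Gibbs
end
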